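/- arXiv:2507.00221 — 5 statements merged into one kernel-verified Lean document; each statement's English description precedes it below -/
import Mathlib

section
/- Let P be a poset with binary meets equipped with a Grothendieck pretopology. The propositional sheafification functor, sending a downward closed subset F of P to its closure under coverings, preserves finite meets (intersections) of downward closed subsets. -/
/-- A Grothendieck pretopology on a poset `P` with binary meets: to each `p : P` we
assign a collection `Cov p` of subsets of `{q | q ≤ p}` called coverings, satisfying
identities, stability under base change, and locality. -/
structure PosetPretopology (P : Type*) [SemilatticeInf P] where
  Cov : P → Set (Set P)
  le_of_mem : ∀ p S, S ∈ Cov p → ∀ q ∈ S, q ≤ p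
  id_mem : ∀ p : P, ({p} : Set P) ∈ Cov p
  base_change : ∀ p q S, S ∈ Cov p → q ≤ p → ((fun r => r ⊓ q) '' S) ∈ Cov q
  locality : ∀ p S, S ∈ Cov p → ∀ T : P → Set P, (∀ s ∈ S, T s ∈ Cov s) →
      (⋃ s ∈ S, T s) ∈ Cov p

/-- The propositional sheafification of a downward closed subset:
its closure under coverings. -/
def sheafify {P : Type*} [SemilatticeInf P] (J : PosetPretopology P) (F : Set P) : Set P :=
  {p | ∃ S ∈ J.Cov p, S ⊆ F}

/-!
Every point has the trivial covering, so `univ` is fixed, and sheafification is monotone, so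
it maps `F ∩ G` into `F^sh ∩ G^sh`. Conversely, given coverings `S ⊆ F` and `T ⊆ G` of `p`,
pulling `T` back along each `s ∈ S` and gluing gives the covering `{s ⊓ t}` of `p`, which lies
in `F ∩ G` because `F` and `G` are downward closed.
-/

open scoped SetFamily

namespace PosetPretopology

variable {P : Type*} [SemilatticeInf P] (J : PosetPretopology P)

theorem infs_mem_cov {p : P} {S T : Set P} (hS : S ∈ J.Cov p) (hT : T ∈ J.Cov p) :
    S ⊼ T ∈ J.Cov p := by
  have hTS : T ⊼ S ∈ J.Cov p := by
    rw [← Set.iUnion_image_inf_right]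
    exact J.locality p S hS _ fun s hs => J.base_change p s T hT (J.le_of_mem p S hS s hs)
  rwa [Set.infs_comm]

end PosetPretopology

section Sheafify

variable {P : Type*} [SemilatticeInf P] (J : PosetPretopology P)

theorem sheafify_univ : sheafify J Set.univ = Set.univ :=
  Set.eq_univ_of_forall fun p => ⟨{p}, J.id_mem p, Set.subset_univ _⟩

theorem sheafify_mono {F G : Set P} (h : F ⊆ G) : sheafify J F ⊆ sheafify J G :=
  fun _ ⟨S, hS, hSF⟩ => ⟨S, hS, hSF.trans h⟩

theorem sheafify_inter {F G : Set P} (hF : IsLowerSet F) (hG : IsLowerSet G) :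
    sheafify J (F ∩ G) = sheafify J F ∩ sheafify J G := by
  refine (Set.subset_inter (sheafify_mono J Set.inter_subset_left)
    (sheafify_mono J Set.inter_subset_right)).antisymm ?_
  rintro p ⟨⟨S, hS, hSF⟩, ⟨T, hT, hTG⟩⟩
  refine ⟨S ⊼ T, J.infs_mem_cov hS hT, Set.infs_subset_iff.2 fun s hs t ht => ?_⟩
  exact ⟨hF inf_le_left (hSF hs), hG inf_le_right (hTG ht)⟩

end Sheafify

/-- The propositional sheafification functor preserves finite meets (intersections)
of downward closed subsets: it preserves the top element and binary intersections. -/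
theorem sheafify_preserves_finite_meets {P : Type*} [SemilatticeInf P]
    (J : PosetPretopology P) :
    sheafify J (Set.univ : Set P) = Set.univ ∧
    ∀ F G : Set P, IsLowerSet F → IsLowerSet G →
      sheafify J (F ∩ G) = sheafify J F ∩ sheafify J G :=
  ⟨sheafify_univ J, fun _ _ => sheafify_inter J⟩
end

section
/- Let F be a frame and P ⊆ F a subset closed under binary meets such that every element of F is a join of elements of P. Equip P with the induced covering relation: {B_i ≤ B | i ∈ I} is a covering iff ⋁_{i∈I} B_i = B in F. Then the map sending U ∈ F to the propositional sheaf h_U = Hom_F(−, U) restricted to P is an order isomorphism from F onto the poset of propositional sheaves on (P, τ). -/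
/-!
The inverse of `U ↦ h_U` is `f ↦ sSup f`. Since `P` is a basis, `U` is the join of the basic
elements below it. Conversely, if `b ∈ P` lies below `sSup f`, then frame distributivity makes
`{b ⊓ c | c ∈ f}` a covering of `b` by elements of `P` (closure under meets) lying in `f`
(downward closure), so `b ∈ f` because `f` is a sheaf.
-/

/-- A propositional sheaf on the site given by a subset `P` of a frame `α`, with the
induced covering relation (`S` covers `b` iff `S ⊆ P`, all members of `S` are `≤ b`,
and `sSup S = b`): a subset `f ⊆ P`, downward closed within `P`, and closed under
coverings. -/
def IsPropSheaf {α : Type*} [Order.Frame α] (P : Set α) (f : Set α) : Prop :=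
  f ⊆ P ∧ (∀ b ∈ f, ∀ c ∈ P, c ≤ b → c ∈ f) ∧
    ∀ b ∈ P, ∀ S ⊆ P, (∀ s ∈ S, s ≤ b) → sSup S = b → S ⊆ f → b ∈ f

open Set

theorem sSup_inter_Iic_of_exists_sSup_eq {α : Type*} [CompleteLattice α] {P : Set α} {U : α}
    (hU : ∃ S ⊆ P, sSup S = U) : sSup (P ∩ Iic U) = U := by
  obtain ⟨S, hSP, rfl⟩ := hU
  exact le_antisymm (sSup_le fun _ hb => hb.2)
    (sSup_le_sSup fun s hs => ⟨hSP hs, le_sSup hs⟩)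

section Frame

variable {α : Type*} [Order.Frame α] {P : Set α}

theorem isPropSheaf_inter_Iic (P : Set α) (U : α) : IsPropSheaf P (P ∩ Iic U) := by
  refine ⟨inter_subset_left, fun b hb c hc hcb => ⟨hc, hcb.trans hb.2⟩,
    fun b hb S _ _ hSb hSf => ⟨hb, ?_⟩⟩
  rw [← hSb]
  exact sSup_le fun s hs => (hSf hs).2

theorem IsPropSheaf.inter_Iic_sSup {f : Set α} (hmeet : ∀ a ∈ P, ∀ b ∈ P, a ⊓ b ∈ P)
    (hf : IsPropSheaf P f) : P ∩ Iic (sSup f) = f := by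
  obtain ⟨hfP, hdown, hcover⟩ := hf
  refine Subset.antisymm (fun b ⟨hbP, hbf⟩ => ?_) fun b hb => ⟨hfP hb, le_sSup hb⟩
  have hmem : ∀ c ∈ f, b ⊓ c ∈ P := fun c hc => hmeet b hbP c (hfP hc)
  have hcovers : sSup ((b ⊓ ·) '' f) = b := by
    rw [sSup_image, ← inf_sSup_eq, inf_eq_left.mpr hbf]
  refine hcover b hbP _ ?_ ?_ hcovers ?_ <;> rintro _ ⟨c, hc, rfl⟩
  · exact hmem c hc
  · exact inf_le_left
  · exact hdown c hc _ (hmem c hc) inf_le_right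

variable (P) in
def sheafOrderIso (hmeet : ∀ a ∈ P, ∀ b ∈ P, a ⊓ b ∈ P)
    (hbasis : ∀ U : α, ∃ S ⊆ P, sSup S = U) : α ≃o {f : Set α // IsPropSheaf P f} :=
  Equiv.toOrderIso
    { toFun := fun U => ⟨P ∩ Iic U, isPropSheaf_inter_Iic P U⟩
      invFun := fun f => sSup f.1
      left_inv := fun U => sSup_inter_Iic_of_exists_sSup_eq (hbasis U)
      right_inv := fun f => Subtype.ext (f.2.inter_Iic_sSup hmeet) }
    (fun _ _ hUV => inter_subset_inter_right P (Iic_subset_Iic.mpr hUV))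
    (fun _ _ hfg => sSup_le_sSup hfg)

end Frame

/-- **Basis theorem.** Let `α` be a frame and `P ⊆ α` a subset closed under binary
meets such that every element of `α` is a join of elements of `P`.  Then
`U ↦ h_U = {b ∈ P | b ≤ U}` is an order isomorphism from `α` onto the poset of
propositional sheaves on `(P, τ)` (ordered by inclusion). -/
theorem basis_theorem {α : Type*} [Order.Frame α] (P : Set α)
    (hmeet : ∀ a ∈ P, ∀ b ∈ P, a ⊓ b ∈ P)
    (hbasis : ∀ U : α, ∃ S ⊆ P, sSup S = U) :
    ∃ e : α ≃o {f : Set α // IsPropSheaf P f},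
      ∀ U : α, (e U : Set α) = {b ∈ P | b ≤ U} :=
  ⟨sheafOrderIso P hmeet hbasis, fun _ => rfl⟩
end

section
/- Every frame is isomorphic to the frame of propositional sheaves on some locally cartesian 0-site (namely itself with the canonical covering relation). -/
section

variable {α : Type*} [Order.Frame α]

lemma isPropSheaf_univ_Iic (a : α) : IsPropSheaf (Set.univ : Set α) (Set.Iic a) := by
  refine ⟨Set.subset_univ _, fun b hb c _ hcb => hcb.trans hb, ?_⟩
  rintro b - S - - rfl hSf
  exact sSup_le hSf

lemma IsPropSheaf.sSup_mem {f : Set α} (hf : IsPropSheaf Set.univ f) : sSup f ∈ f :=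
  hf.2.2 _ trivial f (Set.subset_univ f) (fun _ => le_sSup) rfl subset_rfl

lemma IsPropSheaf.eq_Iic_sSup {f : Set α} (hf : IsPropSheaf Set.univ f) : f = Set.Iic (sSup f) :=
  Set.Subset.antisymm (fun _ => le_sSup) fun _ hc => hf.2.1 _ hf.sSup_mem _ trivial hc

end

/-- Every frame is isomorphic to the frame of propositional sheaves on some locally
cartesian 0-site: namely itself (the site `P = univ`) with the canonical covering
relation (`S` covers `b` iff `sSup S = b`). -/
theorem frame_iso_propositional_sheaves {α : Type*} [Order.Frame α] :
    Nonempty (α ≃o {f : Set α // IsPropSheaf (Set.univ : Set α) f}) := by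
  let principal : α ↪o {f : Set α // IsPropSheaf Set.univ f} :=
    OrderEmbedding.ofMapLEIff (fun a => ⟨Set.Iic a, isPropSheaf_univ_Iic a⟩)
      fun _ _ => Set.Iic_subset_Iic
  have principal_surjective : Function.Surjective principal := fun ⟨f, hf⟩ =>
    ⟨sSup f, Subtype.ext hf.eq_Iic_sSup.symm⟩
  exact ⟨OrderIso.ofSurjective principal principal_surjective⟩
end

section
/- Let X be a profinite space and B its Boolean algebra of clopen (equivalently compact open) subsets. The assignment sending a clopen set U to its indicator function 1_U ∈ C(X, Z) induces an isomorphism of abelian groups M(B) ≅ C(X, Z), where C(X, Z) is the group of continuous (equivalently locally constant) integer-valued functions on X. -/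
open scoped Classical

/-- The subgroup of relators defining the module of motives of a lower bounded
distributive lattice `D`: generated by `[⊥]` and the modularity relators
`[U] + [V] - [U ⊔ V] - [U ⊓ V]`. -/
def motiveRelators (D : Type*) [DistribLattice D] [OrderBot D] :
    AddSubgroup (FreeAbelianGroup D) :=
  AddSubgroup.closure
    ({FreeAbelianGroup.of (⊥ : D)} ∪
      {x | ∃ U V : D, x = FreeAbelianGroup.of U + FreeAbelianGroup.of V
          - FreeAbelianGroup.of (U ⊔ V) - FreeAbelianGroup.of (U ⊓ V)})

/-- The module of motives `M(D)` of a lower bounded distributive lattice `D`: the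
free abelian group on `D` modulo `[⊥] = 0` and `[U] + [V] = [U ⊔ V] + [U ⊓ V]`. -/
def Motive (D : Type*) [DistribLattice D] [OrderBot D] : Type _ :=
  FreeAbelianGroup D ⧸ motiveRelators D

noncomputable instance (D : Type*) [DistribLattice D] [OrderBot D] :
    AddCommGroup (Motive D) :=
  QuotientAddGroup.Quotient.addCommGroup (motiveRelators D)

/-- The universal valuation `D → M(D)`, `U ↦ [U]`. -/
def motiveOf {D : Type*} [DistribLattice D] [OrderBot D] (U : D) : Motive D :=
  QuotientAddGroup.mk (FreeAbelianGroup.of U)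

/-- A valuation on a lower bounded distributive lattice with values in an abelian
group: `μ ⊥ = 0` and modularity `μ U + μ V = μ (U ⊔ V) + μ (U ⊓ V)`. -/
def IsValuation {D A : Type*} [DistribLattice D] [OrderBot D] [AddCommGroup A]
    (μ : D → A) : Prop :=
  μ ⊥ = 0 ∧ ∀ U V : D, μ U + μ V = μ (U ⊔ V) + μ (U ⊓ V)

section Aux

variable {D : Type*} [DistribLattice D] [OrderBot D]

lemma motiveOf_bot : motiveOf (⊥ : D) = 0 :=
  (QuotientAddGroup.eq_zero_iff _).2 (AddSubgroup.subset_closure (Or.inl rfl))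

lemma motiveOf_modular (U V : D) :
    motiveOf U + motiveOf V = motiveOf (U ⊔ V) + motiveOf (U ⊓ V) := by
  have hg : (FreeAbelianGroup.of U + FreeAbelianGroup.of V
      - FreeAbelianGroup.of (U ⊔ V) - FreeAbelianGroup.of (U ⊓ V)) ∈ motiveRelators D :=
    AddSubgroup.subset_closure (Or.inr ⟨U, V, rfl⟩)
  suffices h2 : (QuotientAddGroup.mk (FreeAbelianGroup.of U + FreeAbelianGroup.of V) :
      FreeAbelianGroup D ⧸ motiveRelators D)
      = QuotientAddGroup.mk (FreeAbelianGroup.of (U ⊔ V) + FreeAbelianGroup.of (U ⊓ V)) from h2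
  rw [QuotientAddGroup.eq]
  convert neg_mem hg using 1
  abel

lemma motiveOf_sup_disjoint (U V : D) (h : U ⊓ V = ⊥) :
    motiveOf (U ⊔ V) = motiveOf U + motiveOf V := by
  rw [motiveOf_modular U V, h, motiveOf_bot, add_zero]

lemma motiveOf_refine {ι : Type*} (s : Finset ι) (B : ι → D)
    (hdisj : ∀ i ∈ s, ∀ j ∈ s, i ≠ j → B i ⊓ B j = ⊥)
    (A : D) (hA : A ≤ s.sup B) :
    motiveOf A = ∑ i ∈ s, motiveOf (A ⊓ B i) := by
  classical
  induction s using Finset.induction_on generalizing A with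
  | empty =>
      rw [Finset.sup_empty, le_bot_iff] at hA
      simp [hA, motiveOf_bot]
  | @insert a t ha ih =>
      have hBa : B a ⊓ t.sup B = ⊥ := by
        rw [Finset.sup_inf_distrib_left]
        refine le_bot_iff.mp (Finset.sup_le fun j hj => ?_)
        exact (hdisj a (Finset.mem_insert_self a t) j
          (Finset.mem_insert_of_mem hj) (fun h => ha (h ▸ hj))).le
      have hAeq : A = (A ⊓ B a) ⊔ (A ⊓ t.sup B) := by
        rw [← inf_sup_left]
        rw [Finset.sup_insert] at hA
        exact (inf_eq_left.mpr hA).symm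
      have hdisj2 : (A ⊓ B a) ⊓ (A ⊓ t.sup B) = ⊥ := by
        refine le_bot_iff.mp ?_
        calc (A ⊓ B a) ⊓ (A ⊓ t.sup B) ≤ B a ⊓ t.sup B :=
              inf_le_inf inf_le_right inf_le_right
          _ = ⊥ := hBa
      have ih' := ih (fun i hi j hj hij =>
        hdisj i (Finset.mem_insert_of_mem hi) j (Finset.mem_insert_of_mem hj) hij)
        (A ⊓ t.sup B) inf_le_right
      rw [Finset.sum_insert ha]
      calc motiveOf A = motiveOf ((A ⊓ B a) ⊔ (A ⊓ t.sup B)) := by rw [← hAeq]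
        _ = motiveOf (A ⊓ B a) + motiveOf (A ⊓ t.sup B) :=
              motiveOf_sup_disjoint _ _ hdisj2
        _ = motiveOf (A ⊓ B a) + ∑ i ∈ t, motiveOf ((A ⊓ t.sup B) ⊓ B i) := by rw [ih']
        _ = motiveOf (A ⊓ B a) + ∑ i ∈ t, motiveOf (A ⊓ B i) := by
              refine congrArg _ (Finset.sum_congr rfl fun j hj => ?_)
              have h1 : t.sup B ⊓ B j = B j := inf_eq_right.mpr (Finset.le_sup hj)
              rw [inf_assoc, h1]

end Aux

section Profinite

open TopologicalSpace

variable {X : Type*} [TopologicalSpace X]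

/-- The indicator function of a clopen set, as a continuous map to `ℤ`. -/
noncomputable def indC (U : Clopens X) : C(X, ℤ) where
  toFun x := if x ∈ U then 1 else 0
  continuous_toFun := by
    apply IsLocallyConstant.continuous
    intro s
    have : (fun x => if x ∈ U then (1 : ℤ) else 0) ⁻¹' s =
        (if (1 : ℤ) ∈ s then (U : Set X) else ∅) ∪ (if (0 : ℤ) ∈ s then (↑U)ᶜ else ∅) := by
      ext x
      by_cases hx : x ∈ U <;> simp [hx]
    rw [this]
    apply IsOpen.union <;> split_ifs
    · exact U.isClopen.isOpen
    · exact isOpen_empty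
    · exact U.isClopen.compl.isOpen
    · exact isOpen_empty

@[simp] lemma indC_apply (U : Clopens X) (x : X) :
    indC U x = if x ∈ U then 1 else 0 := rfl

lemma mem_sup' {U V : Clopens X} {x : X} : x ∈ U ⊔ V ↔ x ∈ U ∨ x ∈ V := Iff.rfl
lemma mem_inf' {U V : Clopens X} {x : X} : x ∈ U ⊓ V ↔ x ∈ U ∧ x ∈ V := Iff.rfl
lemma not_mem_bot' {x : X} : ¬ x ∈ (⊥ : Clopens X) := not_false

/-- The fiber of a continuous integer-valued map over `n`, as a clopen set. -/
noncomputable def fibC (f : C(X, ℤ)) (n : ℤ) : Clopens X :=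
  ⟨f ⁻¹' {n}, (isClopen_discrete _).preimage f.continuous⟩

lemma mem_fibC {f : C(X, ℤ)} {n : ℤ} {x : X} : x ∈ fibC f n ↔ f x = n := Iff.rfl

variable [CompactSpace X]

lemma range_finite (f : C(X, ℤ)) : (Set.range f).Finite :=
  (isCompact_range f.continuous).finite_of_discrete

/-- The inverse map `C(X, ℤ) → M(Clopens X)`. -/
noncomputable def psiC (f : C(X, ℤ)) : Motive (Clopens X) :=
  ∑ n ∈ (range_finite f).toFinset, n • motiveOf (fibC f n)

lemma psiC_eq {ι : Type*} (f : C(X, ℤ)) (s : Finset ι) (B : ι → Clopens X)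
    (hdisj : ∀ i ∈ s, ∀ j ∈ s, i ≠ j → B i ⊓ B j = ⊥)
    (hcover : s.sup B = ⊤) (v : ι → ℤ)
    (hval : ∀ i ∈ s, ∀ x, x ∈ B i → f x = v i) :
    psiC f = ∑ i ∈ s, v i • motiveOf (B i) := by
  classical
  have hfib : ∀ n : ℤ, motiveOf (fibC f n) = ∑ i ∈ s, motiveOf (fibC f n ⊓ B i) := fun n =>
    motiveOf_refine s B hdisj _ (by rw [hcover]; exact le_top)
  have hkey : ∀ i ∈ s, ∀ n : ℤ, fibC f n ⊓ B i = if n = v i then B i else ⊥ := by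
    intro i hi n
    by_cases h : n = v i
    · rw [if_pos h]
      refine le_antisymm inf_le_right (le_inf (SetLike.le_def.mpr fun x hx => ?_) le_rfl)
      exact show f x = n from (hval i hi x hx).trans h.symm
    · rw [if_neg h]
      refine le_bot_iff.mp (SetLike.le_def.mpr fun x hx => absurd ?_ h)
      exact (mem_fibC.mp (mem_inf'.mp hx).1).symm.trans (hval i hi x (mem_inf'.mp hx).2)
  rw [psiC]
  have : ∀ n ∈ (range_finite f).toFinset,
      n • motiveOf (fibC f n) = ∑ i ∈ s, (if n = v i then n • motiveOf (B i) else 0) := by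
    intro n _
    rw [hfib n, Finset.smul_sum]
    refine Finset.sum_congr rfl fun i hi => ?_
    rw [hkey i hi n]
    split_ifs with h
    · rfl
    · rw [motiveOf_bot, smul_zero]
  rw [Finset.sum_congr rfl this, Finset.sum_comm]
  refine Finset.sum_congr rfl fun i hi => ?_
  have hsum : ∑ n ∈ (range_finite f).toFinset, (if n = v i then n • motiveOf (B i) else 0)
      = ∑ n ∈ (range_finite f).toFinset, (if v i = n then n • motiveOf (B i) else 0) := by
    refine Finset.sum_congr rfl fun n _ => ?_
    simp [eq_comm]
  rw [hsum, Finset.sum_ite_eq]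
  by_cases hvi : v i ∈ (range_finite f).toFinset
  · rw [if_pos hvi]
  · rw [if_neg hvi]
    have hBbot : B i = ⊥ := by
      apply SetLike.ext
      intro x
      constructor
      · intro hx
        exact absurd ((range_finite f).mem_toFinset.mpr ⟨x, hval i hi x hx⟩) hvi
      · intro hx
        exact absurd hx not_mem_bot'
    rw [hBbot, motiveOf_bot, smul_zero]

lemma psiC_add (f g : C(X, ℤ)) : psiC (f + g) = psiC f + psiC g := by
  classical
  set S := (range_finite f).toFinset with hS
  set T := (range_finite g).toFinset with hT
  set B : ℤ × ℤ → Clopens X := fun p => fibC f p.1 ⊓ fibC g p.2 with hB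
  have hdisj : ∀ p ∈ S ×ˢ T, ∀ q ∈ S ×ˢ T, p ≠ q → B p ⊓ B q = ⊥ := by
    intro p _ q _ hpq
    refine le_bot_iff.mp (SetLike.le_def.mpr fun x hx => ?_)
    obtain ⟨hp, hq⟩ := mem_inf'.mp hx
    obtain ⟨h1, h2⟩ := mem_inf'.mp hp
    obtain ⟨h3, h4⟩ := mem_inf'.mp hq
    refine absurd (Prod.ext ?_ ?_ : p = q) hpq
    · exact (mem_fibC.mp h1).symm.trans (mem_fibC.mp h3)
    · exact (mem_fibC.mp h2).symm.trans (mem_fibC.mp h4)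
  have hcover : (S ×ˢ T).sup B = ⊤ := by
    rw [eq_top_iff]
    intro x _
    have hmem : (f x, g x) ∈ S ×ˢ T := Finset.mem_product.mpr
      ⟨(range_finite f).mem_toFinset.mpr ⟨x, rfl⟩, (range_finite g).mem_toFinset.mpr ⟨x, rfl⟩⟩
    exact SetLike.le_def.mp (Finset.le_sup hmem) (⟨rfl, rfl⟩ : x ∈ B (f x, g x))
  have h1 := psiC_eq (f + g) (S ×ˢ T) B hdisj hcover (fun p => p.1 + p.2)
    (fun p _ x hx => by
      rw [ContinuousMap.add_apply, mem_fibC.mp hx.1, mem_fibC.mp hx.2])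
  have h2 := psiC_eq f (S ×ˢ T) B hdisj hcover (fun p => p.1)
    (fun p _ x hx => mem_fibC.mp hx.1)
  have h3 := psiC_eq g (S ×ˢ T) B hdisj hcover (fun p => p.2)
    (fun p _ x hx => mem_fibC.mp hx.2)
  rw [h1, h2, h3, ← Finset.sum_add_distrib]
  exact Finset.sum_congr rfl fun p _ => add_smul _ _ _

lemma psiC_indC (U : Clopens X) : psiC (indC U) = motiveOf U := by
  classical
  have h := psiC_eq (indC U) (Finset.univ : Finset Bool)
    (fun b => if b then U else Uᶜ)
    (by
      rintro i - j - hij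
      match i, j with
      | true, true => exact absurd rfl hij
      | false, false => exact absurd rfl hij
      | true, false => simpa using inf_compl_eq_bot
      | false, true => simpa using compl_inf_eq_bot)
    (by
      rw [eq_top_iff]
      intro x _
      by_cases hx : x ∈ U
      · exact SetLike.le_def.mp (Finset.le_sup (Finset.mem_univ true)) (by simpa using hx)
      · exact SetLike.le_def.mp (Finset.le_sup (Finset.mem_univ false)) (show x ∈ Uᶜ from hx))
    (fun b => if b then 1 else 0)
    (by
      rintro i - x hx
      match i with
      | true =>
          have hx' : x ∈ U := by simpa using hx
          simp [indC_apply, hx']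
      | false =>
          have hx' : x ∉ U := by
            have : x ∈ Uᶜ := by simpa using hx
            exact this
          simp [indC_apply, hx'])
  rw [h, Fintype.sum_bool]
  simp

variable (X)

/-- The induced hom from the free abelian group. -/
noncomputable def phiC0 : FreeAbelianGroup (Clopens X) →+ C(X, ℤ) :=
  FreeAbelianGroup.lift indC

lemma relators_le_ker : motiveRelators (Clopens X) ≤ (phiC0 X).ker := by
  rw [motiveRelators, AddSubgroup.closure_le]
  rintro x (rfl | ⟨U, V, rfl⟩)
  · rw [SetLike.mem_coe, AddMonoidHom.mem_ker, phiC0, FreeAbelianGroup.lift_apply_of]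
    ext x
    simp [indC_apply, not_mem_bot']
  · rw [SetLike.mem_coe, AddMonoidHom.mem_ker, map_sub, map_sub, map_add, phiC0,
      FreeAbelianGroup.lift_apply_of, FreeAbelianGroup.lift_apply_of, FreeAbelianGroup.lift_apply_of,
      FreeAbelianGroup.lift_apply_of]
    ext x
    by_cases hU : x ∈ U <;> by_cases hV : x ∈ V <;>
      simp [mem_sup', mem_inf', hU, hV]

/-- The induced hom `M(Clopens X) →+ C(X, ℤ)`. -/
noncomputable def phiC : Motive (Clopens X) →+ C(X, ℤ) :=
  QuotientAddGroup.lift _ (phiC0 X) (relators_le_ker X)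

lemma phiC_motiveOf (U : Clopens X) : phiC X (motiveOf U) = indC U := by
  show phiC0 X (FreeAbelianGroup.of U) = indC U
  rw [phiC0, FreeAbelianGroup.lift_apply_of]

variable {X}

lemma phiC_psiC (f : C(X, ℤ)) : phiC X (psiC f) = f := by
  classical
  rw [psiC, map_sum]
  ext x
  rw [ContinuousMap.coe_sum, Finset.sum_apply]
  have : ∀ n ∈ (range_finite f).toFinset,
      (phiC X (n • motiveOf (fibC f n))) x = if f x = n then n else 0 := by
    intro n _
    rw [map_zsmul, phiC_motiveOf]
    by_cases h : f x = n
    · simp [indC_apply, mem_fibC, h]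
    · simp [indC_apply, mem_fibC, h]
  rw [Finset.sum_congr rfl this, Finset.sum_ite_eq]
  rw [if_pos ((range_finite f).mem_toFinset.mpr ⟨x, rfl⟩)]

lemma psiC_phiC (m : Motive (Clopens X)) : psiC (phiC X m) = m := by
  have key : ((AddMonoidHom.mk' psiC psiC_add).comp (phiC X)).comp
      (QuotientAddGroup.mk' (motiveRelators (Clopens X)))
      = QuotientAddGroup.mk' (motiveRelators (Clopens X)) := by
    ext U
    show psiC (phiC X (motiveOf U)) = motiveOf U
    rw [phiC_motiveOf, psiC_indC]
  obtain ⟨z, rfl⟩ := QuotientAddGroup.mk'_surjective (motiveRelators (Clopens X)) m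
  exact DFunLike.congr_fun key z

end Profinite

/-- For a profinite space `X` with Boolean algebra of clopen subsets `B`, the
assignment `U ↦ 1_U` induces an isomorphism `M(B) ≅ C(X, ℤ)` onto the group of
continuous integer-valued functions on `X` (ℤ discrete). -/
theorem motive_clopens_eq_continuous_int_functions (X : Type*) [TopologicalSpace X]
    [CompactSpace X] [T2Space X] [TotallyDisconnectedSpace X] :
    ∃ e : Motive (TopologicalSpace.Clopens X) ≃+ C(X, ℤ),
      ∀ (U : TopologicalSpace.Clopens X) (x : X),
        e (motiveOf U) x = if x ∈ U then 1 else 0 := by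
  let e : Motive (TopologicalSpace.Clopens X) ≃+ C(X, ℤ) :=
    { toFun := phiC X
      invFun := psiC
      left_inv := psiC_phiC
      right_inv := phiC_psiC
      map_add' := (phiC X).map_add }
  refine ⟨e, fun U x => ?_⟩
  show phiC X (motiveOf U) x = _
  rw [phiC_motiveOf, indC_apply]
end

section
/- Let P be a finite poset and D = O(P) its lattice of lower sets. Every valuation μ : D → A (into an abelian group A) extends uniquely to a valuation on the full powerset P(P). Consequently the inclusion D → P(P) induces an isomorphism M(D) ≅ M(P(P)) ≅ Z[P] of motive modules. -/
open scoped Classical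

section Motive
variable {D : Type*} [DistribLattice D] [OrderBot D] {A : Type*} [AddCommGroup A]

lemma motiveOf_isValuation : IsValuation (motiveOf : D → Motive D) := by
  constructor
  · show (QuotientAddGroup.mk _ : Motive D) = 0
    rw [QuotientAddGroup.eq_zero_iff]
    exact AddSubgroup.subset_closure (Or.inl rfl)
  · intro U V
    have key : (QuotientAddGroup.mk (FreeAbelianGroup.of U + FreeAbelianGroup.of V
        - FreeAbelianGroup.of (U ⊔ V) - FreeAbelianGroup.of (U ⊓ V)) : Motive D) = 0 :=
      (QuotientAddGroup.eq_zero_iff _).2 (AddSubgroup.subset_closure (Or.inr ⟨U, V, rfl⟩))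
    have : motiveOf U + motiveOf V - motiveOf (U ⊔ V) - motiveOf (U ⊓ V) = 0 := key
    rw [sub_sub, sub_eq_zero] at this
    exact this

noncomputable def motiveLift (μ : D → A) (h : IsValuation μ) : Motive D →+ A :=
  QuotientAddGroup.lift (motiveRelators D) (FreeAbelianGroup.lift μ) (by
    intro x hx
    refine AddSubgroup.closure_le _ |>.2 ?_ hx
    rintro y (rfl | ⟨U, V, rfl⟩)
    · rw [SetLike.mem_coe, AddMonoidHom.mem_ker, FreeAbelianGroup.lift_apply_of]
      exact h.1
    · simp only [SetLike.mem_coe, AddMonoidHom.mem_ker, map_sub, map_add, FreeAbelianGroup.lift_apply_of]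
      rw [sub_sub, sub_eq_zero]
      exact h.2 U V)

@[simp] lemma motiveLift_of (μ : D → A) (h : IsValuation μ) (U : D) :
    motiveLift μ h (motiveOf U) = μ U := by
  show QuotientAddGroup.lift _ _ _ (QuotientAddGroup.mk _) = _
  simp [motiveLift]

lemma motive_hom_ext {f g : Motive D →+ A}
    (h : ∀ U, f (motiveOf U) = g (motiveOf U)) : f = g := by
  ext x
  induction x using QuotientAddGroup.induction_on with
  | H z =>
    induction z using FreeAbelianGroup.induction_on with
    | zero => exact (map_zero f).trans (map_zero g).symm
    | of U => exact h U
    | neg U hU =>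
      have : (QuotientAddGroup.mk (-FreeAbelianGroup.of U) : Motive D)
          = -QuotientAddGroup.mk (FreeAbelianGroup.of U) := rfl
      rw [this]
      exact (map_neg f _).trans ((congrArg Neg.neg hU).trans (map_neg g _).symm)
    | add x y hx hy =>
      have : (QuotientAddGroup.mk (x + y) : Motive D)
          = QuotientAddGroup.mk x + QuotientAddGroup.mk y := rfl
      rw [this]
      exact (map_add f _ _).trans ((congrArg₂ (· + ·) hx hy).trans (map_add g _ _).symm)

end Motive

section Powerset
variable {P : Type*} [Fintype P] {A : Type*} [AddCommGroup A]

lemma valuation_finset_sum {ν : Set P → A} (h : IsValuation ν) (s : Finset P) :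
    ν ↑s = ∑ p ∈ s, ν {p} := by
  classical
  induction s using Finset.induction_on with
  | empty => simpa using h.1
  | @insert a s ha ih =>
    have hco : (↑(insert a s) : Set P) = {a} ∪ ↑s := by
      rw [Finset.coe_insert, Set.insert_eq]
    have hmod := h.2 {a} ↑s
    have hinter : ({a} : Set P) ⊓ ↑s = (∅ : Set P) := by
      simp only [Set.inf_eq_inter]
      rw [Set.singleton_inter_eq_empty]
      simpa using ha
    simp only [Set.sup_eq_union, Set.inf_eq_inter] at hmod
    rw [← Set.insert_eq, ← Finset.coe_insert] at hmod
    have h0 : ν (({a} : Set P) ∩ ↑s) = 0 := by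
      rw [Set.singleton_inter_eq_empty.2 (by simpa using ha)]; exact h.1
    rw [h0, add_zero] at hmod
    rw [Finset.sum_insert ha, ← ih, ← hmod]

lemma valuation_sum_singletons {ν : Set P → A} (h : IsValuation ν) (S : Set P) :
    ν S = ∑ p ∈ S.toFinset, ν {p} := by
  classical
  rw [← valuation_finset_sum h, Set.coe_toFinset]

lemma sum_isValuation (f : P → A) :
    IsValuation (fun S : Set P => ∑ p ∈ S.toFinset, f p) := by
  classical
  constructor
  · simp
  · intro U V
    simp only [Set.toFinset_union, Set.toFinset_inter, Set.sup_eq_union, Set.inf_eq_inter]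
    exact (Finset.sum_union_inter).symm

end Powerset

section LowerSets
variable {P : Type*} [PartialOrder P] [Fintype P] {A : Type*} [AddCommGroup A]

lemma lowerSet_valuation_sum {μ : LowerSet P → A} (h : IsValuation μ) (l : LowerSet P) :
    μ l = ∑ p ∈ (l : Set P).toFinset, (μ (LowerSet.Iic p) - μ (LowerSet.Iio p)) := by
  classical
  generalize hn : (l : Set P).toFinset.card = n
  induction n using Nat.strong_induction_on generalizing l with
  | _ n ih =>
    rcases Finset.eq_empty_or_nonempty ((l : Set P).toFinset) with he | hne
    · have hl : l = ⊥ := by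
        ext x
        simp only [LowerSet.coe_bot, Set.mem_empty_iff_false, iff_false]
        intro hx
        have : x ∈ (l : Set P).toFinset := Set.mem_toFinset.2 hx
        simp [he] at this
      rw [he, hl, Finset.sum_empty, h.1]
    · obtain ⟨p, hp, hmax⟩ : ∃ p ∈ (l : Set P).toFinset, ∀ x ∈ (l : Set P).toFinset, ¬ p < x := by
        obtain ⟨p, hp⟩ := Finset.exists_maximal hne
        exact ⟨p, hp.prop, fun x hx hlt => lt_irrefl p (lt_of_lt_of_le hlt (hp.2 hx hlt.le))⟩
      simp only [Set.mem_toFinset] at hp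
      have hlower : IsLowerSet ((l : Set P) \ {p}) := by
        intro x y hxy hx
        rcases hx with ⟨hxl, hxp⟩
        refine ⟨l.lower hxy hxl, ?_⟩
        rintro rfl
        rcases eq_or_lt_of_le hxy with heq | hlt
        · exact hxp heq.symm
        · exact hmax x (Set.mem_toFinset.2 hxl) hlt
      set l' : LowerSet P := ⟨(l : Set P) \ {p}, hlower⟩ with hl'
      have hsup : l' ⊔ LowerSet.Iic p = l := by
        apply SetLike.coe_injective
        rw [LowerSet.coe_sup]
        show ((l : Set P) \ {p}) ∪ Set.Iic p = l
        ext x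
        constructor
        · rintro (⟨hx, _⟩ | hx)
          · exact hx
          · exact l.lower hx hp
        · intro hx
          by_cases hxp : x = p
          · exact Or.inr (hxp ▸ le_refl p)
          · exact Or.inl ⟨hx, hxp⟩
      have hinf : l' ⊓ LowerSet.Iic p = LowerSet.Iio p := by
        apply SetLike.coe_injective
        rw [LowerSet.coe_inf]
        show ((l : Set P) \ {p}) ∩ Set.Iic p = Set.Iio p
        ext x
        simp only [Set.mem_inter_iff, Set.mem_diff, Set.mem_singleton_iff, Set.mem_Iic,
          Set.mem_Iio]
        constructor
        · rintro ⟨⟨_, hxp⟩, hle⟩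
          exact lt_of_le_of_ne hle hxp
        · intro hlt
          exact ⟨⟨l.lower hlt.le hp, hlt.ne⟩, hlt.le⟩
      have hmod := h.2 l' (LowerSet.Iic p)
      rw [hsup, hinf] at hmod
      have hμl : μ l = μ l' + (μ (LowerSet.Iic p) - μ (LowerSet.Iio p)) := by
        rw [← add_sub_assoc, eq_sub_iff_add_eq]
        exact hmod.symm
      have hins : (l : Set P).toFinset = insert p ((l' : Set P).toFinset) := by
        ext x
        simp only [Set.mem_toFinset, Finset.mem_insert]
        show x ∈ (l : Set P) ↔ x = p ∨ x ∈ (l : Set P) \ {p}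
        by_cases hxp : x = p
        · simp [hxp, hp]
        · simp [hxp]
      have hnp : p ∉ ((l' : Set P).toFinset) := by
        simp only [Set.mem_toFinset]
        show p ∉ (l : Set P) \ {p}
        simp
      have hcard : ((l' : Set P).toFinset).card < n := by
        rw [← hn, hins, Finset.card_insert_of_notMem hnp]
        omega
      rw [hμl, ih _ hcard l' rfl, hins, Finset.sum_insert hnp, add_comm]

end LowerSets

section Singleton
variable {P : Type*} [PartialOrder P] {A : Type*} [AddCommGroup A]

lemma valuation_singleton {ν : Set P → A} (h : IsValuation ν) (p : P) :
    ν {p} = ν (Set.Iic p) - ν (Set.Iio p) := by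
  have hmod := h.2 {p} (Set.Iio p)
  have hsup : ({p} : Set P) ⊔ Set.Iio p = Set.Iic p := by
    ext x
    simp only [Set.sup_eq_union, Set.mem_union, Set.mem_singleton_iff, Set.mem_Iio, Set.mem_Iic]
    rw [or_comm, ← le_iff_lt_or_eq]
  have hinf : ({p} : Set P) ⊓ Set.Iio p = (⊥ : Set P) := by
    ext x
    simp only [Set.inf_eq_inter, Set.mem_inter_iff, Set.mem_singleton_iff, Set.mem_Iio,
      Set.bot_eq_empty, Set.mem_empty_iff_false, iff_false, not_and]
    rintro rfl
    exact lt_irrefl _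
  rw [hsup, hinf, h.1, add_zero] at hmod
  rw [eq_sub_iff_add_eq, hmod]

end Singleton


/-- Let `P` be a finite poset and `D = O(P)` its lattice of lower sets.  Every
valuation on `D` extends uniquely to a valuation on the full powerset `P(P)`;
consequently the inclusion induces an isomorphism `M(D) ≅ M(P(P))`, and
`M(P(P)) ≅ ℤ[P]` freely on singletons. -/
theorem valuation_lowerSet_extends_powerset (P : Type*) [PartialOrder P] [Finite P]
    (A : Type*) [AddCommGroup A] :
    (∀ μ : LowerSet P → A, IsValuation μ →
        ∃! ν : Set P → A, IsValuation ν ∧ ∀ l : LowerSet P, ν (l : Set P) = μ l) ∧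
      (∃ e : Motive (LowerSet P) ≃+ Motive (Set P),
        ∀ l : LowerSet P, e (motiveOf l) = motiveOf (l : Set P)) ∧
      ∃ e' : Motive (Set P) ≃+ (P →₀ ℤ),
        ∀ p : P, e' (motiveOf ({p} : Set P)) = Finsupp.single p 1 := by
  haveI : Fintype P := Fintype.ofFinite P
  -- singletons sum to the whole set at the level of motives
  have hMval : IsValuation (motiveOf : Set P → Motive (Set P)) := motiveOf_isValuation
  have hMsingle : ∀ p : P,
      motiveOf (Set.Iic p) - motiveOf (Set.Iio p) = motiveOf ({p} : Set P) := fun p =>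
    (valuation_singleton hMval p).symm
  refine ⟨?_, ?_, ?_⟩
  · -- unique extension of valuations
    intro μ hμ
    refine ⟨fun S => ∑ p ∈ S.toFinset, (μ (LowerSet.Iic p) - μ (LowerSet.Iio p)),
      ⟨sum_isValuation _, fun l => (lowerSet_valuation_sum hμ l).symm⟩, ?_⟩
    rintro ν' ⟨hν', hagree⟩
    funext S
    rw [valuation_sum_singletons hν' S]
    refine Finset.sum_congr rfl fun p _ => ?_
    rw [valuation_singleton hν' p, ← LowerSet.coe_Iic, ← LowerSet.coe_Iio, hagree, hagree]
  · -- M(O(P)) ≃ M(P(P))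
    have hμ₂ : IsValuation (fun l : LowerSet P => motiveOf (l : Set P)) := by
      refine ⟨?_, ?_⟩
      · show motiveOf ((⊥ : LowerSet P) : Set P) = 0
        rw [LowerSet.coe_bot, ← Set.bot_eq_empty]
        exact hMval.1
      · intro U V
        have := hMval.2 (U : Set P) (V : Set P)
        simpa [Set.sup_eq_union, Set.inf_eq_inter] using this
    have hν₂ : IsValuation (fun S : Set P =>
        ∑ p ∈ S.toFinset, (motiveOf (LowerSet.Iic p) - motiveOf (LowerSet.Iio p))) :=
      sum_isValuation _
    set E : Motive (LowerSet P) →+ Motive (Set P) := motiveLift _ hμ₂ with hE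
    set E' : Motive (Set P) →+ Motive (LowerSet P) := motiveLift _ hν₂ with hE'
    have hEE : E'.comp E = AddMonoidHom.id _ := by
      apply motive_hom_ext
      intro l
      simp only [AddMonoidHom.comp_apply, AddMonoidHom.id_apply, hE, hE', motiveLift_of]
      exact (lowerSet_valuation_sum motiveOf_isValuation l).symm
    have hEE' : E.comp E' = AddMonoidHom.id _ := by
      apply motive_hom_ext
      intro S
      simp only [AddMonoidHom.comp_apply, AddMonoidHom.id_apply, hE, hE', motiveLift_of,
        map_sum, map_sub]
      calc ∑ p ∈ S.toFinset,
            (E (motiveOf (LowerSet.Iic p)) - E (motiveOf (LowerSet.Iio p)))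
          = ∑ p ∈ S.toFinset, motiveOf ({p} : Set P) := by
            refine Finset.sum_congr rfl fun p _ => ?_
            rw [hE, motiveLift_of, motiveLift_of]
            simpa using hMsingle p
        _ = motiveOf S := (valuation_sum_singletons hMval S).symm
    refine ⟨{ toFun := E, invFun := E',
              left_inv := fun x => DFunLike.congr_fun hEE x,
              right_inv := fun x => DFunLike.congr_fun hEE' x,
              map_add' := E.map_add }, fun l => ?_⟩
    simp only [AddEquiv.coe_mk, Equiv.coe_fn_mk, hE, motiveLift_of]
  · -- M(P(P)) ≃ ℤ[P]
    have hval : IsValuation (fun S : Set P => ∑ p ∈ S.toFinset, Finsupp.single p (1 : ℤ)) :=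
      sum_isValuation _
    set F : Motive (Set P) →+ (P →₀ ℤ) := motiveLift _ hval with hF
    set G : (P →₀ ℤ) →+ Motive (Set P) :=
      Finsupp.liftAddHom (fun p => zmultiplesHom _ (motiveOf ({p} : Set P))) with hG
    have hGsingle : ∀ (p : P) (n : ℤ), G (Finsupp.single p n) = n • motiveOf ({p} : Set P) := by
      intro p n
      rw [hG, Finsupp.liftAddHom_apply_single]
      rfl
    have hGF : G.comp F = AddMonoidHom.id _ := by
      apply motive_hom_ext
      intro S
      simp only [AddMonoidHom.comp_apply, AddMonoidHom.id_apply, hF, motiveLift_of, map_sum]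
      calc ∑ p ∈ S.toFinset, G (Finsupp.single p (1 : ℤ))
          = ∑ p ∈ S.toFinset, motiveOf ({p} : Set P) := by
            refine Finset.sum_congr rfl fun p _ => ?_
            rw [hGsingle, one_smul]
        _ = motiveOf S := (valuation_sum_singletons hMval S).symm
    have hFsingle : ∀ p : P, F (motiveOf ({p} : Set P)) = Finsupp.single p 1 := by
      intro p
      rw [hF, motiveLift_of]
      simp [Set.toFinset_singleton]
    have hFG : F.comp G = AddMonoidHom.id _ := by
      apply Finsupp.addHom_ext
      intro p n
      simp only [AddMonoidHom.comp_apply, AddMonoidHom.id_apply, hGsingle, map_zsmul,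
        hFsingle]
      rw [Finsupp.smul_single, smul_eq_mul, mul_one]
    refine ⟨{ toFun := F, invFun := G,
              left_inv := fun x => DFunLike.congr_fun hGF x,
              right_inv := fun x => DFunLike.congr_fun hFG x,
              map_add' := F.map_add }, fun p => ?_⟩
    simpa using hFsingle p
end
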